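/- Let p ∈ (1, ∞) and, for a ≥ 0, let φ_a(t) = ∫_0^t (a + s)^{p−2} s ds. There exist constants c, C > 0, depending only on p, such that for all a ≥ 0 and all t ≥ 0: c (a + t)^{p−2} t^2 ≤ φ_a(t) ≤ C (a + t)^{p−2} t^2, where for p < 2 the products (a+t)^{p−2} t^2 are interpreted as 0 when a = t = 0. -/

import Mathlib

open intervalIntegral Real Set MeasureTheory

/-- The shifted N-function `φ_a(t) = ∫₀ᵗ (a + s)^{p-2} s ds`. -/
noncomputable def phiShift (p a t : ℝ) : ℝ :=
  ∫ s in (0:ℝ)..t, (a + s) ^ (p - 2) * s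

/-!
For `0 < s ≤ t` we have `(s / t) (a + t) ≤ a + s ≤ a + t`. Since `x ↦ x ^ (p - 2)` is monotone
in the direction given by the sign of `p - 2`, the integrand `(a + s) ^ (p - 2) s` lies
between `(a + t) ^ (p - 2) s` and
`((s / t) (a + t)) ^ (p - 2) s = (a + t) ^ (p - 2) t ^ (2 - p) s ^ (p - 1)`,
whose integrals over `[0, t]` are `(a + t) ^ (p - 2) t² / 2` and `(a + t) ^ (p - 2) t² / p`.
-/

theorem intervalIntegral_sandwich {f g h : ℝ → ℝ} {t : ℝ} (ht : 0 ≤ t)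
    (hf : AEStronglyMeasurable f) (hg : IntervalIntegrable g volume 0 t)
    (hh : IntervalIntegrable h volume 0 t) (hg0 : ∀ s ∈ Ioc 0 t, 0 ≤ g s)
    (hgf : ∀ s ∈ Ioc 0 t, g s ≤ f s) (hfh : ∀ s ∈ Ioc 0 t, f s ≤ h s) :
    (∫ s in 0..t, g s) ≤ ∫ s in 0..t, f s ∧
      (∫ s in 0..t, f s) ≤ ∫ s in 0..t, h s := by
  have hf_int : IntervalIntegrable f volume 0 t := by
    refine hh.mono_fun' hf.restrict ?_
    rw [uIoc_of_le ht]
    filter_upwards [ae_restrict_mem measurableSet_Ioc] with s hs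
    rw [Real.norm_of_nonneg ((hg0 s hs).trans (hgf s hs))]
    exact hfh s hs
  exact ⟨integral_mono_on_of_le_Ioo ht hg hf_int fun s hs => hgf s (Ioo_subset_Ioc_self hs),
    integral_mono_on_of_le_Ioo ht hf_int hh fun s hs => hfh s (Ioo_subset_Ioc_self hs)⟩

section

variable {p a s t : ℝ}

theorem integral_const_mul_id (c t : ℝ) : ∫ s in 0..t, c * s = 1 / 2 * (c * t ^ 2) := by
  rw [intervalIntegral.integral_const_mul, integral_id]
  ring

theorem integral_const_mul_rpow_sub_one (c : ℝ) (hp : 0 < p) (ht : 0 ≤ t) :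
    ∫ s in 0..t, c * t ^ (2 - p) * s ^ (p - 1) = 1 / p * (c * t ^ 2) := by
  rw [intervalIntegral.integral_const_mul, integral_rpow (Or.inl (by linarith)), sub_add_cancel,
    zero_rpow hp.ne', sub_zero, mul_assoc, ← mul_div_assoc, ← rpow_add' ht (by simp),
    sub_add_cancel, rpow_two]
  ring

theorem div_mul_add_le_add (ha : 0 ≤ a) (hs : 0 < s) (hst : s ≤ t) :
    s / t * (a + t) ≤ a + s := by
  have ht : 0 < t := hs.trans_le hst
  rw [div_mul_eq_mul_div, div_le_iff₀ ht]
  nlinarith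

theorem rpow_mul_rpow_sub_one_eq (hs : 0 < s) (ht : 0 < t) (hat : 0 ≤ a + t) :
    (a + t) ^ (p - 2) * t ^ (2 - p) * s ^ (p - 1) = (s / t * (a + t)) ^ (p - 2) * s := by
  rw [mul_rpow (by positivity) hat, div_rpow hs.le ht.le, show p - 1 = p - 2 + 1 by ring,
    rpow_add_one hs.ne', show 2 - p = -(p - 2) by ring, rpow_neg ht.le]
  have : 0 < t ^ (p - 2) := rpow_pos_of_pos ht _
  field_simp

theorem phiShift_integrand_bounds_of_le_two (hp2 : p ≤ 2) (ha : 0 ≤ a) (hs : 0 < s)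
    (hst : s ≤ t) :
    (a + t) ^ (p - 2) * s ≤ (a + s) ^ (p - 2) * s ∧
      (a + s) ^ (p - 2) * s ≤ (a + t) ^ (p - 2) * t ^ (2 - p) * s ^ (p - 1) := by
  have ht : 0 < t := hs.trans_le hst
  rw [rpow_mul_rpow_sub_one_eq hs ht (by linarith)]
  exact ⟨mul_le_mul_of_nonneg_right
      (rpow_le_rpow_of_nonpos (by positivity) (by linarith) (by linarith)) hs.le,
    mul_le_mul_of_nonneg_right
      (rpow_le_rpow_of_nonpos (by positivity) (div_mul_add_le_add ha hs hst) (by linarith)) hs.le⟩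

theorem phiShift_integrand_bounds_of_two_le (hp2 : 2 ≤ p) (ha : 0 ≤ a) (hs : 0 < s)
    (hst : s ≤ t) :
    (a + t) ^ (p - 2) * t ^ (2 - p) * s ^ (p - 1) ≤ (a + s) ^ (p - 2) * s ∧
      (a + s) ^ (p - 2) * s ≤ (a + t) ^ (p - 2) * s := by
  have ht : 0 < t := hs.trans_le hst
  rw [rpow_mul_rpow_sub_one_eq hs ht (by linarith)]
  exact ⟨mul_le_mul_of_nonneg_right
      (rpow_le_rpow (by positivity) (div_mul_add_le_add ha hs hst) (by linarith)) hs.le,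
    mul_le_mul_of_nonneg_right (rpow_le_rpow (by positivity) (by linarith) (by linarith)) hs.le⟩

theorem measurable_phiShift_integrand (p a : ℝ) :
    Measurable fun s : ℝ => (a + s) ^ (p - 2) * s := by
  fun_prop

theorem phiShift_bounds_of_le_two (hp1 : 1 < p) (hp2 : p ≤ 2) (ha : 0 ≤ a) (ht : 0 ≤ t) :
    1 / 2 * ((a + t) ^ (p - 2) * t ^ 2) ≤ phiShift p a t ∧
      phiShift p a t ≤ 1 / p * ((a + t) ^ (p - 2) * t ^ 2) := by
  rw [← integral_const_mul_id, ← integral_const_mul_rpow_sub_one _ (by linarith) ht]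
  exact intervalIntegral_sandwich ht (measurable_phiShift_integrand p a).aestronglyMeasurable
    ((continuous_const.mul continuous_id).intervalIntegrable 0 t)
    ((intervalIntegrable_rpow' (by linarith)).const_mul _)
    (fun s hs => by have := hs.1; positivity)
    (fun s hs => (phiShift_integrand_bounds_of_le_two hp2 ha hs.1 hs.2).1)
    (fun s hs => (phiShift_integrand_bounds_of_le_two hp2 ha hs.1 hs.2).2)

theorem phiShift_bounds_of_two_le (hp2 : 2 ≤ p) (ha : 0 ≤ a) (ht : 0 ≤ t) :
    1 / p * ((a + t) ^ (p - 2) * t ^ 2) ≤ phiShift p a t ∧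
      phiShift p a t ≤ 1 / 2 * ((a + t) ^ (p - 2) * t ^ 2) := by
  rw [← integral_const_mul_id, ← integral_const_mul_rpow_sub_one _ (by linarith) ht]
  exact intervalIntegral_sandwich ht (measurable_phiShift_integrand p a).aestronglyMeasurable
    ((intervalIntegrable_rpow' (by linarith)).const_mul _)
    ((continuous_const.mul continuous_id).intervalIntegrable 0 t)
    (fun s hs => by have := hs.1; positivity)
    (fun s hs => (phiShift_integrand_bounds_of_two_le hp2 ha hs.1 hs.2).1)
    (fun s hs => (phiShift_integrand_bounds_of_two_le hp2 ha hs.1 hs.2).2)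

end

/-- `c (a+t)^{p-2} t² ≤ φ_a(t) ≤ C (a+t)^{p-2} t²`. -/
theorem phiShift_equiv_power (p : ℝ) (hp1 : 1 < p) :
    ∃ c C : ℝ, 0 < c ∧ 0 < C ∧
      ∀ a t : ℝ, 0 ≤ a → 0 ≤ t →
        c * ((a + t) ^ (p - 2) * t ^ 2) ≤ phiShift p a t ∧
        phiShift p a t ≤ C * ((a + t) ^ (p - 2) * t ^ 2) := by
  have hp : 0 < p := by linarith
  refine ⟨min (1 / 2) (1 / p), max (1 / 2) (1 / p), by positivity, by positivity,
    fun a t ha ht => ?_⟩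
  have hX : 0 ≤ (a + t) ^ (p - 2) * t ^ 2 := by positivity
  rcases le_total p 2 with hp2 | hp2
  · obtain ⟨hlower, hupper⟩ := phiShift_bounds_of_le_two hp1 hp2 ha ht
    exact ⟨(mul_le_mul_of_nonneg_right (min_le_left _ _) hX).trans hlower,
      hupper.trans (mul_le_mul_of_nonneg_right (le_max_right _ _) hX)⟩
  · obtain ⟨hlower, hupper⟩ := phiShift_bounds_of_two_le hp2 ha ht
    exact ⟨(mul_le_mul_of_nonneg_right (min_le_right _ _) hX).trans hlower,
      hupper.trans (mul_le_mul_of_nonneg_right (le_max_left _ _) hX)⟩
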